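/- (Commutator estimate, flat case.) Let s₀ > d/2, m ∈ R with −s₀ < m ≤ s₀+1, and let p(ξ) be a Fourier multiplier symbol of class S^m_{1,0} on R^d (i.e., |∂_ξ^α p(ξ)| ≤ C_α ⟨ξ⟩^{m−|α|} for all multi-indices α). Then there exists C > 0, depending only on s₀, m and finitely many seminorms of p, such that for all σ > 0, all a ∈ H^{σ,s₀+1}(T^d) and all u ∈ H^{σ,m−1}(T^d): ‖[p(D), a]u‖_{H^{σ,0}} ≤ C ‖a‖_{H^{σ,s₀+1}} ‖u‖_{H^{σ,m−1}}. -/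

import Mathlib

set_option maxHeartbeats 1600000


open scoped ENNReal NNReal BigOperators
open MeasureTheory

/-- Euclidean norm of a lattice point `ξ ∈ ℤ^d`. -/
noncomputable def latNorm {d : ℕ} (ξ : Fin d → ℤ) : ℝ :=
  Real.sqrt (∑ i, ((ξ i : ℝ)) ^ 2)

/-- Japanese bracket `⟨ξ⟩ = (1+|ξ|²)^{1/2}`. -/
noncomputable def latJap {d : ℕ} (ξ : Fin d → ℤ) : ℝ :=
  Real.sqrt (1 + ∑ i, ((ξ i : ℝ)) ^ 2)

/-- Weight `e^{2σ|ξ|}⟨ξ⟩^{2s}` of the analytic Sobolev space `H^{σ,s}(T^d)`. -/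
noncomputable def hWeight {d : ℕ} (σ s : ℝ) (ξ : Fin d → ℤ) : ℝ≥0∞ :=
  ENNReal.ofReal (Real.exp (2 * σ * latNorm ξ) * (latJap ξ) ^ (2 * s))

/-- Squared `H^{σ,s}(T^d)` norm of a function given by its Fourier
coefficients `c : ℤ^d → ℂ`. -/
noncomputable def hNormSq {d : ℕ} (σ s : ℝ) (c : (Fin d → ℤ) → ℂ) : ℝ≥0∞ :=
  ∑' ξ, hWeight σ s ξ * (‖c ξ‖₊ : ℝ≥0∞) ^ 2

/-- `H^{σ,s}(T^d)` norm. -/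
noncomputable def hNorm {d : ℕ} (σ s : ℝ) (c : (Fin d → ℤ) → ℂ) : ℝ≥0∞ :=
  (hNormSq σ s c) ^ (1/2 : ℝ)

/-- Convolution of Fourier coefficients: this represents the pointwise
product of the corresponding functions on `T^d` (up to the fixed
normalization factor `(2π)^{-d}`, harmless for the estimates below). -/
noncomputable def conv {d : ℕ} (f g : (Fin d → ℤ) → ℂ) : (Fin d → ℤ) → ℂ :=
  fun ξ => ∑' ζ, f (ξ - ζ) * g ζ

/-- The lattice point `ξ ∈ ℤ^d` viewed in `ℝ^d` (Euclidean). -/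
noncomputable def toEuc {d : ℕ} (ξ : Fin d → ℤ) : EuclideanSpace ℝ (Fin d) :=
  WithLp.toLp 2 (fun i => (ξ i : ℝ))

/-- Fourier coefficients of the commutator `[p(D), a]u` (up to the harmless
normalization factor `(2π)^{-d}`): `Σ_ζ â(ξ-ζ)(p(ξ)-p(ζ))û(ζ)`. -/
noncomputable def commCoef {d : ℕ} (p : EuclideanSpace ℝ (Fin d) → ℂ)
    (a u : (Fin d → ℤ) → ℂ) : (Fin d → ℤ) → ℂ :=
  fun ξ => ∑' ζ : Fin d → ℤ, a (ξ - ζ) * (p (toEuc ξ) - p (toEuc ζ)) * u ζ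

section Geom
variable {d : ℕ}
local notation "E" => EuclideanSpace ℝ (Fin d)

noncomputable def jr (x : E) : ℝ := Real.sqrt (1 + ‖x‖ ^ 2)

lemma jr_one_le (x : E) : 1 ≤ jr x := by
  have h : (1:ℝ) ≤ 1 + ‖x‖ ^ 2 := le_add_of_nonneg_right (by positivity)
  have := Real.sqrt_le_sqrt h
  simpa [jr, Real.sqrt_one] using this

lemma jr_pos (x : E) : 0 < jr x := lt_of_lt_of_le one_pos (jr_one_le x)

lemma norm_le_jr (x : E) : ‖x‖ ≤ jr x := by
  have : ‖x‖ = Real.sqrt (‖x‖ ^ 2) := by rw [Real.sqrt_sq (norm_nonneg x)]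
  rw [this]
  exact Real.sqrt_le_sqrt (by nlinarith)

lemma jr_sq (x : E) : jr x ^ 2 = 1 + ‖x‖ ^ 2 := Real.sq_sqrt (by positivity)

lemma jr_le_jr_add (x y : E) : jr x ≤ jr y + ‖x - y‖ := by
  have hc : 0 ≤ ‖x - y‖ := norm_nonneg _
  have hxe : y + (x - y) = x := by abel
  have hnx : ‖x‖ ≤ ‖y‖ + ‖x - y‖ := by
    calc ‖x‖ = ‖y + (x - y)‖ := by rw [hxe]
    _ ≤ ‖y‖ + ‖x - y‖ := norm_add_le _ _
  have h1 : jr x ≤ Real.sqrt (1 + (‖y‖ + ‖x - y‖) ^ 2) := by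
    apply Real.sqrt_le_sqrt; nlinarith [norm_nonneg x]
  have hsy : ‖y‖ ≤ jr y := norm_le_jr y
  have hjy : 0 ≤ jr y := (jr_pos y).le
  have h2 : Real.sqrt (1 + (‖y‖ + ‖x - y‖) ^ 2) ≤ jr y + ‖x - y‖ := by
    rw [show jr y + ‖x - y‖ = Real.sqrt ((jr y + ‖x - y‖)^2) by
      rw [Real.sqrt_sq (by positivity)]]
    apply Real.sqrt_le_sqrt
    have h3 : jr y ^ 2 = 1 + ‖y‖ ^ 2 := jr_sq y
    nlinarith
  linarith

lemma jr_le_three (x z : E) (h : jr z ≤ 2 * jr (x - z)) : jr x ≤ 3 * jr (x - z) := by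
  have h1 := jr_le_jr_add x z
  have h2 : ‖x - z‖ ≤ jr (x - z) := norm_le_jr _
  linarith

lemma symbKey (s₀ m : ℝ) (hs₀ : 0 < s₀) (hm1 : -s₀ < m) (hm2 : m ≤ s₀ + 1)
    (p : E → ℂ) (hp : ContDiff ℝ (⊤ : ℕ∞) p) (C₀ C₁ : ℝ) (hC₀ : 0 ≤ C₀) (hC₁ : 0 ≤ C₁)
    (h0 : ∀ x : E, ‖p x‖ ≤ C₀ * jr x ^ m)
    (h1 : ∀ x : E, ‖fderiv ℝ p x‖ ≤ C₁ * jr x ^ (m - 1)) :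
    ∃ C : ℝ, 0 < C ∧ ∀ x z : E,
      ‖p x - p z‖ ≤ C * (jr (x - z) ^ (-s₀) * jr (x - z) ^ (s₀ + 1) * jr z ^ (m - 1)
        + jr z ^ (-s₀) * jr (x - z) ^ (s₀ + 1) * jr z ^ (m - 1)
        + jr x ^ (-s₀) * jr (x - z) ^ (s₀ + 1) * jr z ^ (m - 1)) := by
  have rsplit : ∀ (b r s : ℝ), 0 < b → b ^ (r + s) = b ^ r * b ^ s :=
    fun b r s hb => Real.rpow_add hb r s
  have hdiv2 : ∀ (b e : ℝ), 0 < b → (b / 2) ^ e = 2 ^ (-e) * b ^ e := by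
    intro b e hb
    rw [Real.div_rpow hb.le (by norm_num : (0:ℝ) ≤ 2), div_eq_mul_inv,
      ← Real.rpow_neg (by norm_num : (0:ℝ) ≤ 2), mul_comm]
  set K : ℝ := (3:ℝ) ^ m * (2:ℝ) ^ (s₀ + 1 - m) + (3:ℝ) ^ m * (2:ℝ) ^ (1 - m)
      + (3:ℝ) ^ (m + s₀) * (2:ℝ) ^ (1 - m) with hK
  set κ : ℝ := ((3:ℝ)/2) ^ (m - 1) + (2:ℝ) ^ (1 - m) with hκ
  have hKpos : 0 < K := by
    have := Real.rpow_pos_of_pos (show (0:ℝ) < 3 by norm_num) m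
    have := Real.rpow_pos_of_pos (show (0:ℝ) < 3 by norm_num) (m + s₀)
    have := Real.rpow_pos_of_pos (show (0:ℝ) < 2 by norm_num) (s₀ + 1 - m)
    have := Real.rpow_pos_of_pos (show (0:ℝ) < 2 by norm_num) (1 - m)
    positivity
  have hκpos : 0 < κ := by
    have := Real.rpow_pos_of_pos (show (0:ℝ) < 3/2 by norm_num) (m - 1)
    have := Real.rpow_pos_of_pos (show (0:ℝ) < 2 by norm_num) (1 - m)
    positivity
  refine ⟨C₀ * (2 + K) + C₁ * κ + 1, by positivity, fun x z => ?_⟩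
  have hjx := jr_pos x
  have hjz := jr_pos z
  have hjd := jr_pos (x - z)
  set T1 : ℝ := jr (x - z) ^ (-s₀) * jr (x - z) ^ (s₀ + 1) * jr z ^ (m - 1) with hT1d
  set T2 : ℝ := jr z ^ (-s₀) * jr (x - z) ^ (s₀ + 1) * jr z ^ (m - 1) with hT2d
  set T3 : ℝ := jr x ^ (-s₀) * jr (x - z) ^ (s₀ + 1) * jr z ^ (m - 1) with hT3d
  have hT1pos : 0 < T1 := by
    have := Real.rpow_pos_of_pos hjd (-s₀); have := Real.rpow_pos_of_pos hjd (s₀+1)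
    have := Real.rpow_pos_of_pos hjz (m-1); positivity
  have hT2pos : 0 < T2 := by
    have := Real.rpow_pos_of_pos hjz (-s₀); have := Real.rpow_pos_of_pos hjd (s₀+1)
    have := Real.rpow_pos_of_pos hjz (m-1); positivity
  have hT3pos : 0 < T3 := by
    have := Real.rpow_pos_of_pos hjx (-s₀); have := Real.rpow_pos_of_pos hjd (s₀+1)
    have := Real.rpow_pos_of_pos hjz (m-1); positivity
  have hT1 : T1 = jr (x - z) * jr z ^ (m - 1) := by
    rw [hT1d, ← rsplit _ _ _ hjd]
    norm_num
  rcases le_or_gt (jr z) (2 * jr (x - z)) with hreg | hreg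
  · -- Region II
    have hnorm : ‖p x - p z‖ ≤ C₀ * jr x ^ m + C₀ * jr z ^ m :=
      (norm_sub_le _ _).trans (add_le_add (h0 x) (h0 z))
    have hzsplit : jr z ^ m = jr z * jr z ^ (m - 1) := by
      rw [show m = 1 + (m - 1) by ring, rsplit _ _ _ hjz, Real.rpow_one]
      ring_nf
    have hb1 : jr z ^ m ≤ 2 * T1 := by
      rw [hT1, hzsplit]
      have hzpow := Real.rpow_pos_of_pos hjz (m - 1)
      have := mul_le_mul_of_nonneg_right hreg hzpow.le
      linarith
    have hx3 : jr x ≤ 3 * jr (x - z) := jr_le_three x z hreg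
    have hhalf : jr z / 2 ≤ jr (x - z) := by linarith
    have hb2 : jr x ^ m ≤ K * (T1 + T2 + T3) := by
      have hmain : jr x ^ m ≤ K * T1 ∨ jr x ^ m ≤ K * T2 ∨ jr x ^ m ≤ K * T3 := by
        rcases le_or_gt 1 m with hm | hm
        · -- use T2
          right; left
          have e1 : jr x ^ m ≤ (3 * jr (x - z)) ^ m :=
            Real.rpow_le_rpow hjx.le hx3 (by linarith)
          have e2 : (3 * jr (x - z)) ^ m = 3 ^ m * jr (x - z) ^ m :=
            Real.mul_rpow (by norm_num) hjd.le
          have e3 : jr (x - z) ^ m = jr (x - z) ^ (s₀ + 1) * jr (x - z) ^ (m - s₀ - 1) := by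
            rw [← rsplit _ _ _ hjd]; ring_nf
          have e4 : jr (x - z) ^ (m - s₀ - 1) ≤ (jr z / 2) ^ (m - s₀ - 1) :=
            Real.rpow_le_rpow_of_nonpos (by linarith) hhalf (by linarith)
          have e5 : (jr z / 2) ^ (m - s₀ - 1) = 2 ^ (s₀ + 1 - m) * jr z ^ (m - s₀ - 1) := by
            rw [hdiv2 _ _ hjz]; ring_nf
          have e6 : jr z ^ (m - s₀ - 1) = jr z ^ (-s₀) * jr z ^ (m - 1) := by
            rw [← rsplit _ _ _ hjz]; ring_nf
          have h3m : (0:ℝ) < 3 ^ m := Real.rpow_pos_of_pos (by norm_num) m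
          have h2e : (0:ℝ) < 2 ^ (s₀ + 1 - m) := Real.rpow_pos_of_pos (by norm_num) _
          have hd1 : (0:ℝ) < jr (x - z) ^ (s₀ + 1) := Real.rpow_pos_of_pos hjd _
          calc jr x ^ m ≤ 3 ^ m * jr (x - z) ^ m := by rw [← e2]; exact e1
            _ = 3 ^ m * (jr (x - z) ^ (s₀ + 1) * jr (x - z) ^ (m - s₀ - 1)) := by rw [← e3]
            _ ≤ 3 ^ m * (jr (x - z) ^ (s₀ + 1) * (2 ^ (s₀ + 1 - m) * jr z ^ (m - s₀ - 1))) := by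
                have := mul_le_mul_of_nonneg_left (e4.trans_eq e5) hd1.le
                exact mul_le_mul_of_nonneg_left this h3m.le
            _ = 3 ^ m * 2 ^ (s₀ + 1 - m) * T2 := by rw [e6, hT2d]; ring
            _ ≤ K * T2 := by
                apply mul_le_mul_of_nonneg_right _ hT2pos.le
                have h1p : (0:ℝ) < 3 ^ m * 2 ^ (1 - m) :=
                  mul_pos h3m (Real.rpow_pos_of_pos (by norm_num) _)
                have h2p : (0:ℝ) < 3 ^ (m + s₀) * 2 ^ (1 - m) :=
                  mul_pos (Real.rpow_pos_of_pos (by norm_num) _)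
                    (Real.rpow_pos_of_pos (by norm_num) _)
                rw [hK]; linarith
        · rcases le_or_gt 0 m with hm0 | hm0
          · -- 0 ≤ m < 1 : use T1
            left
            have e1 : jr x ^ m ≤ (3 * jr (x - z)) ^ m :=
              Real.rpow_le_rpow hjx.le hx3 hm0
            have e2 : (3 * jr (x - z)) ^ m = 3 ^ m * jr (x - z) ^ m :=
              Real.mul_rpow (by norm_num) hjd.le
            have e3 : jr (x - z) ^ m = jr (x - z) * jr (x - z) ^ (m - 1) := by
              rw [show m = 1 + (m - 1) by ring, rsplit _ _ _ hjd, Real.rpow_one]; ring_nf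
            have e4 : jr (x - z) ^ (m - 1) ≤ (jr z / 2) ^ (m - 1) :=
              Real.rpow_le_rpow_of_nonpos (by linarith) hhalf (by linarith)
            have e5 : (jr z / 2) ^ (m - 1) = 2 ^ (1 - m) * jr z ^ (m - 1) := by
              rw [hdiv2 _ _ hjz]; ring_nf
            have h3m : (0:ℝ) < 3 ^ m := Real.rpow_pos_of_pos (by norm_num) m
            have h2e : (0:ℝ) < 2 ^ (1 - m) := Real.rpow_pos_of_pos (by norm_num) _
            calc jr x ^ m ≤ 3 ^ m * jr (x - z) ^ m := by rw [← e2]; exact e1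
              _ = 3 ^ m * (jr (x - z) * jr (x - z) ^ (m - 1)) := by rw [← e3]
              _ ≤ 3 ^ m * (jr (x - z) * (2 ^ (1 - m) * jr z ^ (m - 1))) := by
                  have := mul_le_mul_of_nonneg_left (e4.trans_eq e5) hjd.le
                  exact mul_le_mul_of_nonneg_left this h3m.le
              _ = 3 ^ m * 2 ^ (1 - m) * (jr (x - z) * jr z ^ (m - 1)) := by ring
              _ = 3 ^ m * 2 ^ (1 - m) * T1 := by rw [← hT1]
              _ ≤ K * T1 := by
                  apply mul_le_mul_of_nonneg_right _ hT1pos.le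
                  have h1p : (0:ℝ) < 3 ^ m * 2 ^ (s₀ + 1 - m) :=
                    mul_pos h3m (Real.rpow_pos_of_pos (by norm_num) _)
                  have h2p : (0:ℝ) < 3 ^ (m + s₀) * 2 ^ (1 - m) :=
                    mul_pos (Real.rpow_pos_of_pos (by norm_num) _)
                      (Real.rpow_pos_of_pos (by norm_num) _)
                  rw [hK]; linarith
          · -- m < 0 : use T3
            right; right
            -- jr x ^ m = jr x ^ (-s₀) * jr x ^ (m + s₀)
            have e0 : jr x ^ m = jr x ^ (-s₀) * jr x ^ (m + s₀) := by
              rw [← rsplit _ _ _ hjx]; ring_nf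
            have e1 : jr x ^ (m + s₀) ≤ (3 * jr (x - z)) ^ (m + s₀) :=
              Real.rpow_le_rpow hjx.le hx3 (by linarith)
            have e2 : (3 * jr (x - z)) ^ (m + s₀) = 3 ^ (m + s₀) * jr (x - z) ^ (m + s₀) :=
              Real.mul_rpow (by norm_num) hjd.le
            -- 1 = jr z ^ (1 - m) * jr z ^ (m - 1)
            have e3 : jr (x - z) ^ (m + s₀) = jr (x - z) ^ (s₀ + 1) * jr (x - z) ^ (m - 1) := by
              rw [← rsplit _ _ _ hjd]; ring_nf
            have e4 : jr (x - z) ^ (m - 1) ≤ (jr z / 2) ^ (m - 1) :=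
              Real.rpow_le_rpow_of_nonpos (by linarith) hhalf (by linarith)
            have e5 : (jr z / 2) ^ (m - 1) = 2 ^ (1 - m) * jr z ^ (m - 1) := by
              rw [hdiv2 _ _ hjz]; ring_nf
            have h3m : (0:ℝ) < 3 ^ (m + s₀) := Real.rpow_pos_of_pos (by norm_num) _
            have h2e : (0:ℝ) < 2 ^ (1 - m) := Real.rpow_pos_of_pos (by norm_num) _
            have hxs : (0:ℝ) < jr x ^ (-s₀) := Real.rpow_pos_of_pos hjx _
            have hd1 : (0:ℝ) < jr (x - z) ^ (s₀ + 1) := Real.rpow_pos_of_pos hjd _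
            calc jr x ^ m = jr x ^ (-s₀) * jr x ^ (m + s₀) := e0
              _ ≤ jr x ^ (-s₀) * (3 ^ (m + s₀) * (jr (x - z) ^ (s₀ + 1) * jr (x - z) ^ (m - 1))) := by
                  apply mul_le_mul_of_nonneg_left _ hxs.le
                  rw [← e3, ← e2]; exact e1
              _ ≤ jr x ^ (-s₀) * (3 ^ (m + s₀) * (jr (x - z) ^ (s₀ + 1) * (2 ^ (1 - m) * jr z ^ (m - 1)))) := by
                  apply mul_le_mul_of_nonneg_left _ hxs.le
                  apply mul_le_mul_of_nonneg_left _ h3m.le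
                  exact mul_le_mul_of_nonneg_left (e4.trans_eq e5) hd1.le
              _ = 3 ^ (m + s₀) * 2 ^ (1 - m) * T3 := by rw [hT3d]; ring
              _ ≤ K * T3 := by
                  apply mul_le_mul_of_nonneg_right _ hT3pos.le
                  have h1p : (0:ℝ) < 3 ^ m * 2 ^ (s₀ + 1 - m) :=
                    mul_pos (Real.rpow_pos_of_pos (by norm_num) _)
                      (Real.rpow_pos_of_pos (by norm_num) _)
                  have h2p : (0:ℝ) < 3 ^ m * 2 ^ (1 - m) :=
                    mul_pos (Real.rpow_pos_of_pos (by norm_num) _)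
                      (Real.rpow_pos_of_pos (by norm_num) _)
                  rw [hK]; linarith
      rcases hmain with h | h | h
      · have h2 : K * T1 ≤ K * (T1 + T2 + T3) :=
          mul_le_mul_of_nonneg_left (by linarith) hKpos.le
        linarith
      · have h2 : K * T2 ≤ K * (T1 + T2 + T3) :=
          mul_le_mul_of_nonneg_left (by linarith) hKpos.le
        linarith
      · have h2 : K * T3 ≤ K * (T1 + T2 + T3) :=
          mul_le_mul_of_nonneg_left (by linarith) hKpos.le
        linarith
    have hxm : (0:ℝ) < jr x ^ m := Real.rpow_pos_of_pos hjx m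
    calc ‖p x - p z‖ ≤ C₀ * jr x ^ m + C₀ * jr z ^ m := hnorm
      _ ≤ C₀ * (K * (T1 + T2 + T3)) + C₀ * (2 * T1) := by
          exact add_le_add (mul_le_mul_of_nonneg_left hb2 hC₀)
            (mul_le_mul_of_nonneg_left hb1 hC₀)
      _ ≤ (C₀ * (2 + K) + C₁ * κ + 1) * (T1 + T2 + T3) := by
          have hS : (0:ℝ) < T1 + T2 + T3 := by linarith
          have e1 : C₀ * (K * (T1 + T2 + T3)) = (C₀ * K) * (T1 + T2 + T3) := by ring
          have e2 : C₀ * (2 * T1) ≤ (C₀ * 2) * (T1 + T2 + T3) := by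
            have : (2:ℝ) * T1 ≤ 2 * (T1 + T2 + T3) := by linarith
            have := mul_le_mul_of_nonneg_left this hC₀
            linarith [this]
          have e3 : (C₀ * K) * (T1 + T2 + T3) + (C₀ * 2) * (T1 + T2 + T3)
              ≤ (C₀ * (2 + K) + C₁ * κ + 1) * (T1 + T2 + T3) := by
            have hrest : (0:ℝ) ≤ (C₁ * κ + 1) * (T1 + T2 + T3) := by positivity
            have expand : (C₀ * (2 + K) + C₁ * κ + 1) * (T1 + T2 + T3)
                = (C₀ * K) * (T1 + T2 + T3) + (C₀ * 2) * (T1 + T2 + T3)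
                  + (C₁ * κ + 1) * (T1 + T2 + T3) := by ring
            rw [expand]; linarith
          linarith
  · -- Region I : MVT
    have hxz : ‖x - z‖ < jr z / 2 := lt_of_le_of_lt (norm_le_jr _) (by linarith)
    have hseg : ∀ y ∈ segment ℝ z x, ‖fderiv ℝ p y‖ ≤ C₁ * κ * jr z ^ (m - 1) := by
      intro y hy
      have hyz : ‖y - z‖ ≤ ‖x - z‖ := by
        rw [segment_eq_image'] at hy
        obtain ⟨t, ht, rfl⟩ := hy
        simp only [add_sub_cancel_left, norm_smul, Real.norm_eq_abs,
          abs_of_nonneg ht.1]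
        calc t * ‖x - z‖ ≤ 1 * ‖x - z‖ :=
              mul_le_mul_of_nonneg_right ht.2 (norm_nonneg _)
          _ = ‖x - z‖ := one_mul _
      have hylow : jr z / 2 ≤ jr y := by
        have := jr_le_jr_add z y
        have hnn : ‖z - y‖ = ‖y - z‖ := by rw [norm_sub_rev]
        rw [hnn] at this
        linarith
      have hyhigh : jr y ≤ 3 / 2 * jr z := by
        have := jr_le_jr_add y z
        linarith
      have hjy := jr_pos y
      have hbd : jr y ^ (m - 1) ≤ κ * jr z ^ (m - 1) := by
        rcases le_or_gt 1 m with hm | hm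
        · have e1 : jr y ^ (m - 1) ≤ (3 / 2 * jr z) ^ (m - 1) :=
            Real.rpow_le_rpow hjy.le hyhigh (by linarith)
          have e2 : (3 / 2 * jr z) ^ (m - 1) = (3/2) ^ (m - 1) * jr z ^ (m - 1) :=
            Real.mul_rpow (by norm_num) hjz.le
          have h2e : (0:ℝ) < 2 ^ (1 - m) := Real.rpow_pos_of_pos (by norm_num) _
          have hzp : (0:ℝ) < jr z ^ (m - 1) := Real.rpow_pos_of_pos hjz _
          calc jr y ^ (m - 1) ≤ (3/2) ^ (m - 1) * jr z ^ (m - 1) := by rw [← e2]; exact e1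
            _ ≤ κ * jr z ^ (m - 1) := by rw [hκ]; nlinarith
        · have e1 : jr y ^ (m - 1) ≤ (jr z / 2) ^ (m - 1) :=
            Real.rpow_le_rpow_of_nonpos (by linarith) hylow (by linarith)
          have e2 : (jr z / 2) ^ (m - 1) = 2 ^ (1 - m) * jr z ^ (m - 1) := by
            rw [hdiv2 _ _ hjz]; ring_nf
          have h32 : (0:ℝ) < (3/2:ℝ) ^ (m - 1) := Real.rpow_pos_of_pos (by norm_num) _
          have hzp : (0:ℝ) < jr z ^ (m - 1) := Real.rpow_pos_of_pos hjz _
          calc jr y ^ (m - 1) ≤ 2 ^ (1 - m) * jr z ^ (m - 1) := by rw [← e2]; exact e1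
            _ ≤ κ * jr z ^ (m - 1) := by rw [hκ]; nlinarith
      calc ‖fderiv ℝ p y‖ ≤ C₁ * jr y ^ (m - 1) := h1 y
        _ ≤ C₁ * (κ * jr z ^ (m - 1)) := mul_le_mul_of_nonneg_left hbd hC₁
        _ = C₁ * κ * jr z ^ (m - 1) := by ring
    have hmvt : ‖p x - p z‖ ≤ C₁ * κ * jr z ^ (m - 1) * ‖x - z‖ := by
      refine Convex.norm_image_sub_le_of_norm_hasFDerivWithin_le
        (fun y hy => ((hp.differentiable (by simp)).differentiableAt).hasFDerivAt.hasFDerivWithinAt)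
        hseg (convex_segment z x) (left_mem_segment ℝ z x) (right_mem_segment ℝ z x)
    have hzp : (0:ℝ) < jr z ^ (m - 1) := Real.rpow_pos_of_pos hjz _
    have h2 : ‖x - z‖ ≤ jr (x - z) := norm_le_jr _
    have hT1' : C₁ * κ * jr z ^ (m - 1) * ‖x - z‖ ≤ C₁ * κ * T1 := by
      rw [hT1]
      have h3 : C₁ * κ * jr z ^ (m - 1) * ‖x - z‖ ≤ C₁ * κ * jr z ^ (m - 1) * jr (x - z) :=
        mul_le_mul_of_nonneg_left h2 (by positivity)
      calc C₁ * κ * jr z ^ (m - 1) * ‖x - z‖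
          ≤ C₁ * κ * jr z ^ (m - 1) * jr (x - z) := h3
        _ = C₁ * κ * (jr (x - z) * jr z ^ (m - 1)) := by ring
    calc ‖p x - p z‖ ≤ C₁ * κ * jr z ^ (m - 1) * ‖x - z‖ := hmvt
      _ ≤ C₁ * κ * T1 := hT1'
      _ ≤ (C₀ * (2 + K) + C₁ * κ + 1) * (T1 + T2 + T3) := by
          have hS : (0:ℝ) < T1 + T2 + T3 := by linarith
          have e1 : C₁ * κ * T1 ≤ (C₁ * κ) * (T1 + T2 + T3) := by
            have h' : T1 ≤ T1 + T2 + T3 := by linarith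
            exact mul_le_mul_of_nonneg_left h' (by positivity)
          have e2 : (0:ℝ) ≤ (C₀ * (2 + K) + 1) * (T1 + T2 + T3) := by positivity
          have expand : (C₀ * (2 + K) + C₁ * κ + 1) * (T1 + T2 + T3)
              = (C₁ * κ) * (T1 + T2 + T3) + (C₀ * (2 + K) + 1) * (T1 + T2 + T3) := by ring
          rw [expand]; linarith
end Geom
section ENN
variable {d : ℕ}
local notation "Λ" => (Fin d → ℤ)

lemma ereal_sqh (x : ℝ≥0∞) : (x ^ (1/2:ℝ)) ^ 2 = x := by
  rw [← ENNReal.rpow_natCast (x ^ (1/2:ℝ)) 2, ← ENNReal.rpow_mul]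
  norm_num

/-- Cauchy–Schwarz for ℝ≥0∞-valued sums on the lattice. -/
lemma enn_cs (u v : Λ → ℝ≥0∞) :
    ∑' n, u n * v n ≤ (∑' n, (u n)^2) ^ (1/2:ℝ) * (∑' n, (v n)^2) ^ (1/2:ℝ) := by
  have h2 : (2:ℝ).HolderConjugate 2 := Real.HolderConjugate.two_two
  have H := ENNReal.lintegral_mul_le_Lp_mul_Lq (Measure.count : Measure Λ) h2
    (f := u) (g := v) (measurable_of_countable u).aemeasurable
    (measurable_of_countable v).aemeasurable
  simp only [lintegral_count] at H
  calc ∑' n, u n * v n = ∑' n, (u * v) n := by rfl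
    _ ≤ (∑' n, u n ^ (2:ℝ)) ^ (1/(2:ℝ)) * (∑' n, v n ^ (2:ℝ)) ^ (1/(2:ℝ)) := H
    _ = (∑' n, (u n)^2) ^ (1/2:ℝ) * (∑' n, (v n)^2) ^ (1/2:ℝ) := by
        congr 2 <;> · apply tsum_congr; intro n
                      rw [← ENNReal.rpow_natCast]; norm_num

lemma enn_cs_sq (u v : Λ → ℝ≥0∞) :
    (∑' n, u n * v n) ^ 2 ≤ (∑' n, (u n)^2) * (∑' n, (v n)^2) := by
  calc (∑' n, u n * v n) ^ 2
      ≤ ((∑' n, (u n)^2) ^ (1/2:ℝ) * (∑' n, (v n)^2) ^ (1/2:ℝ)) ^ 2 := by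
        exact pow_le_pow_left' (enn_cs u v) 2
    _ = (∑' n, (u n)^2) * (∑' n, (v n)^2) := by
        rw [mul_pow, ereal_sqh, ereal_sqh]

lemma tsum_sub_left (f : Λ → ℝ≥0∞) (ξ : Λ) : ∑' ζ, f (ξ - ζ) = ∑' ζ, f ζ :=
  (Equiv.subLeft ξ).tsum_eq f

lemma tsum_sub_right (f : Λ → ℝ≥0∞) (ζ : Λ) : ∑' ξ, f (ξ - ζ) = ∑' ξ, f ξ :=
  (Equiv.subRight ζ).tsum_eq f

/-- Young: ℓ¹ ∗ ℓ² → ℓ². -/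
lemma young1 (f g : Λ → ℝ≥0∞) :
    ∑' ξ, (∑' ζ, f (ξ - ζ) * g ζ) ^ 2 ≤ (∑' η, f η)^2 * ∑' ζ, (g ζ)^2 := by
  have key : ∀ ξ : Λ, (∑' ζ, f (ξ - ζ) * g ζ) ^ 2
      ≤ (∑' η, f η) * ∑' ζ, f (ξ - ζ) * (g ζ)^2 := by
    intro ξ
    have hcs := enn_cs_sq (fun ζ => (f (ξ - ζ)) ^ (1/2:ℝ))
      (fun ζ => (f (ξ - ζ)) ^ (1/2:ℝ) * g ζ)
    have e1 : ∀ ζ : Λ, (f (ξ - ζ)) ^ (1/2:ℝ) * ((f (ξ - ζ)) ^ (1/2:ℝ) * g ζ)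
        = f (ξ - ζ) * g ζ := by
      intro ζ
      rw [← mul_assoc, ← sq, ereal_sqh]
    have e2 : ∀ ζ : Λ, ((f (ξ - ζ)) ^ (1/2:ℝ))^2 = f (ξ - ζ) := fun ζ => ereal_sqh _
    have e3 : ∀ ζ : Λ, ((f (ξ - ζ)) ^ (1/2:ℝ) * g ζ)^2 = f (ξ - ζ) * (g ζ)^2 := by
      intro ζ; rw [mul_pow, ereal_sqh]
    simp only [e1, e2, e3] at hcs
    calc (∑' ζ, f (ξ - ζ) * g ζ) ^ 2 ≤ (∑' ζ, f (ξ - ζ)) * ∑' ζ, f (ξ - ζ) * (g ζ)^2 := hcs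
      _ = (∑' η, f η) * ∑' ζ, f (ξ - ζ) * (g ζ)^2 := by rw [tsum_sub_left]
  calc ∑' ξ, (∑' ζ, f (ξ - ζ) * g ζ) ^ 2
      ≤ ∑' ξ, (∑' η, f η) * ∑' ζ, f (ξ - ζ) * (g ζ)^2 := ENNReal.tsum_le_tsum key
    _ = (∑' η, f η) * ∑' ξ, ∑' ζ, f (ξ - ζ) * (g ζ)^2 := ENNReal.tsum_mul_left
    _ = (∑' η, f η) * ∑' ζ, ∑' ξ, f (ξ - ζ) * (g ζ)^2 := by rw [ENNReal.tsum_comm]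
    _ = (∑' η, f η) * ∑' ζ, (∑' ξ, f (ξ - ζ)) * (g ζ)^2 := by
        congr 1; apply tsum_congr; intro ζ; rw [ENNReal.tsum_mul_right]
    _ = (∑' η, f η) * ∑' ζ, (∑' η, f η) * (g ζ)^2 := by
        congr 1; apply tsum_congr; intro ζ; rw [tsum_sub_right]
    _ = (∑' η, f η)^2 * ∑' ζ, (g ζ)^2 := by
        rw [ENNReal.tsum_mul_left]; ring

lemma conv_comm' (f g : Λ → ℝ≥0∞) (ξ : Λ) :
    ∑' ζ, f (ξ - ζ) * g ζ = ∑' ζ, g (ξ - ζ) * f ζ := by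
  have := (Equiv.subLeft ξ).tsum_eq (fun ζ => f (ξ - ζ) * g ζ)
  rw [← this]
  apply tsum_congr; intro ζ
  simp [Equiv.subLeft, sub_sub_cancel, mul_comm]

lemma young2 (f g : Λ → ℝ≥0∞) :
    ∑' ξ, (∑' ζ, f (ξ - ζ) * g ζ) ^ 2 ≤ (∑' η, (f η)^2) * (∑' ζ, g ζ)^2 := by
  calc ∑' ξ, (∑' ζ, f (ξ - ζ) * g ζ) ^ 2
      = ∑' ξ, (∑' ζ, g (ξ - ζ) * f ζ) ^ 2 := by
        apply tsum_congr; intro ξ; rw [conv_comm']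
    _ ≤ (∑' η, g η)^2 * ∑' ζ, (f ζ)^2 := young1 g f
    _ = (∑' η, (f η)^2) * (∑' ζ, g ζ)^2 := by ring

lemma conv_le (f g : Λ → ℝ≥0∞) (ξ : Λ) :
    ∑' ζ, f (ξ - ζ) * g ζ ≤ (∑' η, (f η)^2) ^ (1/2:ℝ) * (∑' ζ, (g ζ)^2) ^ (1/2:ℝ) := by
  calc ∑' ζ, f (ξ - ζ) * g ζ
      ≤ (∑' ζ, (f (ξ - ζ))^2) ^ (1/2:ℝ) * (∑' ζ, (g ζ)^2) ^ (1/2:ℝ) :=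
        enn_cs (fun ζ => f (ξ - ζ)) g
    _ = (∑' η, (f η)^2) ^ (1/2:ℝ) * (∑' ζ, (g ζ)^2) ^ (1/2:ℝ) := by
        rw [tsum_sub_left (fun η => (f η)^2) ξ]

lemma young3 (φ f g : Λ → ℝ≥0∞) :
    ∑' ξ, (φ ξ * ∑' ζ, f (ξ - ζ) * g ζ) ^ 2
      ≤ (∑' η, (φ η)^2) * ((∑' η, (f η)^2) * ∑' ζ, (g ζ)^2) := by
  have key : ∀ ξ : Λ, (φ ξ * ∑' ζ, f (ξ - ζ) * g ζ) ^ 2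
      ≤ (φ ξ)^2 * ((∑' η, (f η)^2) * ∑' ζ, (g ζ)^2) := by
    intro ξ
    rw [mul_pow]
    apply mul_le_mul_right
    calc (∑' ζ, f (ξ - ζ) * g ζ)^2
        ≤ ((∑' η, (f η)^2) ^ (1/2:ℝ) * (∑' ζ, (g ζ)^2) ^ (1/2:ℝ))^2 :=
          pow_le_pow_left' (conv_le f g ξ) 2
      _ = (∑' η, (f η)^2) * ∑' ζ, (g ζ)^2 := by rw [mul_pow, ereal_sqh, ereal_sqh]
  calc ∑' ξ, (φ ξ * ∑' ζ, f (ξ - ζ) * g ζ) ^ 2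
      ≤ ∑' ξ, (φ ξ)^2 * ((∑' η, (f η)^2) * ∑' ζ, (g ζ)^2) := ENNReal.tsum_le_tsum key
    _ = (∑' η, (φ η)^2) * ((∑' η, (f η)^2) * ∑' ζ, (g ζ)^2) := ENNReal.tsum_mul_right

end ENN
section ENN2
variable {d : ℕ}
local notation "Λ" => (Fin d → ℤ)

lemma enn_two_mul_le (a b : ℝ≥0∞) : 2 * (a * b) ≤ a ^ 2 + b ^ 2 := by
  rcases eq_or_ne a ⊤ with ha | ha
  · rcases eq_or_ne b 0 with hb | hb
    · simp [ha, hb]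
    · have : a ^ 2 = ⊤ := by simp [ha]
      simp [this]
  rcases eq_or_ne b ⊤ with hb | hb
  · rcases eq_or_ne a 0 with ha0 | ha0
    · simp [hb, ha0]
    · have : b ^ 2 = ⊤ := by simp [hb]
      simp [this]
  lift a to ℝ≥0 using ha
  lift b to ℝ≥0 using hb
  rw [← ENNReal.coe_mul, ← ENNReal.coe_pow, ← ENNReal.coe_pow]
  rw [show (2:ℝ≥0∞) = ((2:ℝ≥0):ℝ≥0∞) by norm_cast, ← ENNReal.coe_mul,
    ← ENNReal.coe_add, ENNReal.coe_le_coe, ← NNReal.coe_le_coe]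
  push_cast
  nlinarith [sq_nonneg ((a:ℝ) - (b:ℝ))]

lemma enn_add3_sq (x y z : ℝ≥0∞) : (x + y + z) ^ 2 ≤ 3 * (x ^ 2 + y ^ 2 + z ^ 2) := by
  have e : (x + y + z) ^ 2 = x^2 + y^2 + z^2 + (2*(x*y) + 2*(x*z) + 2*(y*z)) := by ring
  rw [e]
  have h1 := enn_two_mul_le x y
  have h2 := enn_two_mul_le x z
  have h3 := enn_two_mul_le y z
  calc x^2 + y^2 + z^2 + (2*(x*y) + 2*(x*z) + 2*(y*z))
      ≤ x^2 + y^2 + z^2 + ((x^2+y^2) + (x^2+z^2) + (y^2+z^2)) := by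
        exact add_le_add_right (add_le_add (add_le_add h1 h2) h3) _
    _ = 3 * (x^2 + y^2 + z^2) := by ring

lemma nnnorm_tsum_le_enn (F : Λ → ℂ) :
    (‖∑' ζ, F ζ‖₊ : ℝ≥0∞) ≤ ∑' ζ, (‖F ζ‖₊ : ℝ≥0∞) := by
  by_cases hs : Summable F
  · have hn : Summable fun ζ => ‖F ζ‖₊ := by
      rw [← NNReal.summable_coe]
      simpa [coe_nnnorm] using (summable_norm_iff.mpr hs)
    rw [← ENNReal.coe_tsum hn]
    exact ENNReal.coe_le_coe.mpr (nnnorm_tsum_le hn)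
  · rw [tsum_eq_zero_of_not_summable hs]
    simp

lemma tsum_pi_prod (dd : ℕ) (h : ℤ → ℝ≥0∞) :
    ∑' ξ : (Fin dd → ℤ), ∏ i, h (ξ i) = (∑' n : ℤ, h n) ^ dd := by
  induction dd with
  | zero =>
      rw [tsum_eq_single (fun _ => (0:ℤ)) ?_]
      · simp
      · intro b hb
        exact absurd (Subsingleton.elim b _) hb
  | succ n ih =>
      rw [← (Fin.consEquiv (fun _ : Fin (n+1) => ℤ)).tsum_eq (fun ξ => ∏ i, h (ξ i))]
      have e : ∀ q : ℤ × (Fin n → ℤ),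
          (∏ i, h (((Fin.consEquiv (fun _ : Fin (n+1) => ℤ)) q) i)) = h q.1 * ∏ i, h (q.2 i) := by
        intro q
        rw [Fin.prod_univ_succ]
        simp [Fin.consEquiv]
      calc ∑' q : ℤ × (Fin n → ℤ), ∏ i, h (((Fin.consEquiv (fun _ : Fin (n+1) => ℤ)) q) i)
          = ∑' q : ℤ × (Fin n → ℤ), h q.1 * ∏ i, h (q.2 i) := tsum_congr e
        _ = ∑' a : ℤ, ∑' g : Fin n → ℤ, h a * ∏ i, h (g i) := ENNReal.tsum_prod (f := fun (c : ℤ) (w : Fin n → ℤ) => h c * ∏ i, h (w i))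
        _ = ∑' a : ℤ, h a * ∑' g : Fin n → ℤ, ∏ i, h (g i) := by
            apply tsum_congr; intro a; rw [ENNReal.tsum_mul_left]
        _ = (∑' g : Fin n → ℤ, ∏ i, h (g i)) * ∑' a : ℤ, h a := by
            rw [ENNReal.tsum_mul_right]; ring
        _ = (∑' n : ℤ, h n) ^ (n+1) := by rw [ih]; ring

lemma one_dim_sum_ne_top (t : ℝ) (ht : 1/2 < t) :
    (∑' n : ℤ, ENNReal.ofReal ((1 + (n:ℝ)^2) ^ (-t))) ≠ ⊤ := by
  have hnn : ∀ n : ℤ, 0 ≤ (1 + (n:ℝ)^2) ^ (-t) := by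
    intro n; positivity
  have hsum : Summable (fun n : ℤ => (1 + (n:ℝ)^2) ^ (-t)) := by
    have hmaj : Summable (fun n : ℤ => |(n:ℝ)| ^ (-(2*t))) :=
      Real.summable_abs_int_rpow (by linarith)
    apply Summable.of_norm_bounded_eventually hmaj
    have hfin : ({0} : Set ℤ).Finite := Set.finite_singleton 0
    apply Filter.mem_of_superset (hfin.compl_mem_cofinite)
    intro n hn
    simp only [Set.mem_compl_iff, Set.mem_singleton_iff] at hn
    simp only [Set.mem_setOf_eq, Real.norm_eq_abs]
    have hn' : (0:ℝ) < (n:ℝ)^2 := by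
      have : (n:ℝ) ≠ 0 := Int.cast_ne_zero.mpr hn
      positivity
    have h1 : (1 + (n:ℝ)^2) ^ (-t) ≤ ((n:ℝ)^2) ^ (-t) :=
      Real.rpow_le_rpow_of_nonpos hn' (by linarith) (by linarith)
    have h2 : ((n:ℝ)^2) ^ (-t) = |(n:ℝ)| ^ (-(2*t)) := by
      rw [← sq_abs, ← Real.rpow_natCast |(n:ℝ)| 2, ← Real.rpow_mul (abs_nonneg _)]
      norm_num
    rw [abs_of_nonneg (hnn n)]
    rw [h2] at h1
    exact h1
  rw [← ENNReal.ofReal_tsum_of_nonneg hnn hsum]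
  exact ENNReal.ofReal_ne_top

lemma phi_sq_sum_ne_top (s₀ : ℝ) (hd2 : (d:ℝ)/2 < s₀) :
    (∑' ξ : Λ, ENNReal.ofReal ((1 + ∑ i, ((ξ i:ℝ))^2) ^ (-s₀))) ≠ ⊤ := by
  have hs₀ : 0 < s₀ := lt_of_le_of_lt (by positivity) hd2
  rcases Nat.eq_zero_or_pos d with hd | hd
  · subst hd
    rw [tsum_eq_single (fun _ => (0:ℤ)) ?_]
    · exact ENNReal.ofReal_ne_top
    · intro b hb; exact absurd (Subsingleton.elim b _) hb
  · have hdR : (0:ℝ) < d := by exact_mod_cast hd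
    set t : ℝ := s₀ / d with ht
    have htgt : 1/2 < t := by
      rw [ht, lt_div_iff₀ hdR]
      calc (1:ℝ)/2 * d = d/2 := by ring
        _ < s₀ := hd2
    have hpoint : ∀ ξ : Λ, ENNReal.ofReal ((1 + ∑ i, ((ξ i:ℝ))^2) ^ (-s₀))
        ≤ ∏ i, ENNReal.ofReal ((1 + ((ξ i:ℝ))^2) ^ (-t)) := by
      intro ξ
      have hSpos : (0:ℝ) < 1 + ∑ i, ((ξ i:ℝ))^2 := by positivity
      have hPpos : (0:ℝ) < ∏ i, (1 + ((ξ i:ℝ))^2) :=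
        Finset.prod_pos (fun i _ => by positivity)
      have hPS : ∏ i, (1 + ((ξ i:ℝ))^2) ≤ (1 + ∑ i, ((ξ i:ℝ))^2) ^ (d:ℕ) := by
        calc ∏ i, (1 + ((ξ i:ℝ))^2) ≤ ∏ _i : Fin d, (1 + ∑ j, ((ξ j:ℝ))^2) := by
              apply Finset.prod_le_prod (fun i _ => by positivity)
              intro i _
              have : ((ξ i:ℝ))^2 ≤ ∑ j, ((ξ j:ℝ))^2 :=
                Finset.single_le_sum (f := fun j : Fin d => ((ξ j:ℝ))^2)
                  (fun j _ => by positivity) (Finset.mem_univ i)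
              linarith
          _ = (1 + ∑ i, ((ξ i:ℝ))^2) ^ (d:ℕ) := by
              rw [Finset.prod_const, Finset.card_univ, Fintype.card_fin]
      -- (1+S)^{-s₀} ≤ P^{-t}
      have hmain : (1 + ∑ i, ((ξ i:ℝ))^2) ^ (-s₀) ≤ (∏ i, (1 + ((ξ i:ℝ))^2)) ^ (-t) := by
        have h1 : (∏ i, (1 + ((ξ i:ℝ))^2)) ^ t ≤ ((1 + ∑ i, ((ξ i:ℝ))^2) ^ (d:ℕ)) ^ t :=
          Real.rpow_le_rpow hPpos.le hPS (by positivity)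
        have h2 : ((1 + ∑ i, ((ξ i:ℝ))^2) ^ (d:ℕ)) ^ t = (1 + ∑ i, ((ξ i:ℝ))^2) ^ s₀ := by
          rw [← Real.rpow_natCast (1 + ∑ i, ((ξ i:ℝ))^2) d, ← Real.rpow_mul hSpos.le]
          congr 1
          rw [ht]; field_simp
        rw [h2] at h1
        rw [Real.rpow_neg hSpos.le, Real.rpow_neg hPpos.le]
        apply inv_anti₀
        · exact Real.rpow_pos_of_pos hPpos t
        · exact h1
      calc ENNReal.ofReal ((1 + ∑ i, ((ξ i:ℝ))^2) ^ (-s₀))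
          ≤ ENNReal.ofReal ((∏ i, (1 + ((ξ i:ℝ))^2)) ^ (-t)) := ENNReal.ofReal_le_ofReal hmain
        _ = ENNReal.ofReal (∏ i, (1 + ((ξ i:ℝ))^2) ^ (-t)) := by
            rw [← Real.finset_prod_rpow _ _ (fun i _ => by positivity) (-t)]
        _ = ∏ i, ENNReal.ofReal ((1 + ((ξ i:ℝ))^2) ^ (-t)) := by
            rw [ENNReal.ofReal_prod_of_nonneg (fun i _ => by positivity)]
    have hb : (∑' ξ : Λ, ENNReal.ofReal ((1 + ∑ i, ((ξ i:ℝ))^2) ^ (-s₀)))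
        ≤ (∑' n : ℤ, ENNReal.ofReal ((1 + (n:ℝ)^2) ^ (-t))) ^ (d:ℕ) := by
      rw [← tsum_pi_prod d (fun n => ENNReal.ofReal ((1 + (n:ℝ)^2) ^ (-t)))]
      exact ENNReal.tsum_le_tsum hpoint
    exact ne_top_of_le_ne_top (ENNReal.pow_ne_top (one_dim_sum_ne_top t htgt)) hb

end ENN2

section Bridge
variable {d : ℕ}
local notation "Λ" => (Fin d → ℤ)
local notation "E" => EuclideanSpace ℝ (Fin d)

lemma latNorm_eq_norm (ξ : Λ) : latNorm ξ = ‖toEuc ξ‖ := by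
  rw [EuclideanSpace.norm_eq]
  unfold latNorm toEuc
  congr 1
  apply Finset.sum_congr rfl
  intro i _
  rw [Real.norm_eq_abs, sq_abs]
  try rfl

lemma latJap_eq_jr (ξ : Λ) : latJap ξ = jr (toEuc ξ) := by
  unfold latJap jr
  congr 1
  rw [EuclideanSpace.norm_eq]
  rw [Real.sq_sqrt (by positivity)]
  congr 1
  apply Finset.sum_congr rfl
  intro i _
  rw [Real.norm_eq_abs, sq_abs]
  try rfl

lemma toEuc_sub (ξ ζ : Λ) : toEuc (ξ - ζ) = toEuc ξ - toEuc ζ := by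
  ext i
  show (((ξ - ζ) i : ℤ) : ℝ) = (ξ i : ℝ) - (ζ i : ℝ)
  rw [Pi.sub_apply]
  push_cast
  ring

lemma latJap_pos (ξ : Λ) : 0 < latJap ξ := by
  rw [latJap_eq_jr]; exact jr_pos _

lemma latJap_one_le (ξ : Λ) : 1 ≤ latJap ξ := by
  rw [latJap_eq_jr]; exact jr_one_le _

lemma latNorm_triangle (ξ ζ : Λ) : latNorm ξ ≤ latNorm (ξ - ζ) + latNorm ζ := by
  rw [latNorm_eq_norm, latNorm_eq_norm, latNorm_eq_norm, toEuc_sub]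
  have : toEuc ξ = (toEuc ξ - toEuc ζ) + toEuc ζ := by abel
  calc ‖toEuc ξ‖ = ‖(toEuc ξ - toEuc ζ) + toEuc ζ‖ := by rw [← this]
    _ ≤ ‖toEuc ξ - toEuc ζ‖ + ‖toEuc ζ‖ := norm_add_le _ _

lemma latJap_sq (ξ : Λ) : latJap ξ ^ (2:ℕ) = 1 + ∑ i, ((ξ i:ℝ))^2 :=
  Real.sq_sqrt (by positivity)

end Bridge

lemma enn_hsq (x : ℝ≥0∞) : (x ^ 2) ^ (1/2:ℝ) = x := by
  rw [← ENNReal.rpow_natCast x 2, ← ENNReal.rpow_mul]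
  norm_num

/-- commutator estimate, flat case. -/
theorem statement18 (d : ℕ) (s₀ m : ℝ) (hs₀ : (d : ℝ) / 2 < s₀)
    (hm1 : -s₀ < m) (hm2 : m ≤ s₀ + 1)
    (p : EuclideanSpace ℝ (Fin d) → ℂ) (hp : ContDiff ℝ (⊤ : ℕ∞) p)
    (hsym : ∀ n : ℕ, ∃ Cn : ℝ, ∀ ξ : EuclideanSpace ℝ (Fin d),
      ‖iteratedFDeriv ℝ n p ξ‖ ≤ Cn * (Real.sqrt (1 + ‖ξ‖ ^ 2)) ^ (m - (n : ℝ))) :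
    ∃ C : ℝ, 0 < C ∧ ∀ σ : ℝ, 0 < σ → ∀ a u : (Fin d → ℤ) → ℂ,
      hNormSq σ (s₀ + 1) a ≠ ⊤ → hNormSq σ (m - 1) u ≠ ⊤ →
      hNorm σ 0 (commCoef p a u)
        ≤ ENNReal.ofReal C * hNorm σ (s₀ + 1) a * hNorm σ (m - 1) u := by
  classical
  have hs₀pos : 0 < s₀ := lt_of_le_of_lt (by positivity) hs₀
  obtain ⟨C₀', hC₀'⟩ := hsym 0
  obtain ⟨C₁', hC₁'⟩ := hsym 1
  have h0 : ∀ x : EuclideanSpace ℝ (Fin d), ‖p x‖ ≤ (max C₀' 0) * jr x ^ m := by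
    intro x
    have h := hC₀' x
    rw [norm_iteratedFDeriv_zero] at h
    have hcast : m - ((0:ℕ):ℝ) = m := by norm_num
    rw [hcast] at h
    have hpow : (0:ℝ) ≤ jr x ^ m := (Real.rpow_pos_of_pos (jr_pos x) m).le
    rw [show jr x = Real.sqrt (1 + ‖x‖^2) from rfl]
    calc ‖p x‖ ≤ C₀' * Real.sqrt (1 + ‖x‖^2) ^ m := h
      _ ≤ (max C₀' 0) * Real.sqrt (1 + ‖x‖^2) ^ m := by
          apply mul_le_mul_of_nonneg_right (le_max_left _ _)
          exact hpow
  have h1 : ∀ x : EuclideanSpace ℝ (Fin d), ‖fderiv ℝ p x‖ ≤ (max C₁' 0) * jr x ^ (m - 1) := by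
    intro x
    have h := hC₁' x
    have heq : ‖iteratedFDeriv ℝ 1 p x‖ = ‖fderiv ℝ p x‖ := by
      rw [← norm_iteratedFDeriv_fderiv, norm_iteratedFDeriv_zero]
    rw [heq] at h
    have hcast : m - ((1:ℕ):ℝ) = m - 1 := by norm_num
    rw [hcast] at h
    have hpow : (0:ℝ) ≤ jr x ^ (m - 1) := (Real.rpow_pos_of_pos (jr_pos x) _).le
    rw [show jr x = Real.sqrt (1 + ‖x‖^2) from rfl]
    calc ‖fderiv ℝ p x‖ ≤ C₁' * Real.sqrt (1 + ‖x‖^2) ^ (m - 1) := h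
      _ ≤ (max C₁' 0) * Real.sqrt (1 + ‖x‖^2) ^ (m - 1) := by
          apply mul_le_mul_of_nonneg_right (le_max_left _ _)
          exact hpow
  obtain ⟨C, hCpos, hkey⟩ := symbKey s₀ m hs₀pos hm1 hm2 p hp (max C₀' 0) (max C₁' 0)
    (le_max_right _ _) (le_max_right _ _) h0 h1
  -- the φ-weight and its square-summability
  have hφsq : ∀ ξ : Fin d → ℤ, (ENNReal.ofReal (latJap ξ ^ (-s₀)))^2
      = ENNReal.ofReal ((1 + ∑ i, ((ξ i:ℝ))^2) ^ (-s₀)) := by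
    intro ξ
    have hJ := latJap_pos ξ
    have h2 : (latJap ξ ^ (-s₀))^2 = latJap ξ ^ (-s₀) * latJap ξ ^ (-s₀) := sq _
    have h3 : latJap ξ ^ (-s₀) * latJap ξ ^ (-s₀) = latJap ξ ^ (-s₀ + -s₀) :=
      (Real.rpow_add hJ _ _).symm
    have h4 : latJap ξ ^ (-s₀ + -s₀) = ((latJap ξ) ^ (2:ℕ)) ^ (-s₀) := by
      rw [← Real.rpow_natCast (latJap ξ) 2, ← Real.rpow_mul hJ.le]
      congr 1
      push_cast
      ring
    rw [← ENNReal.ofReal_pow (by positivity), h2, h3, h4, latJap_sq]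
  have hΦne : (∑' ξ : Fin d → ℤ, (ENNReal.ofReal (latJap ξ ^ (-s₀)))^2) ≠ ⊤ := by
    rw [tsum_congr hφsq]
    exact phi_sq_sum_ne_top s₀ hs₀
  set Φ : ℝ≥0∞ := ∑' ξ : Fin d → ℤ, (ENNReal.ofReal (latJap ξ ^ (-s₀)))^2 with hΦdef
  have hΦh : Φ ^ (1/2:ℝ) ≠ ⊤ := ENNReal.rpow_ne_top_of_nonneg (by norm_num) hΦne
  have htR : (0:ℝ) ≤ (Φ ^ (1/2:ℝ)).toReal := ENNReal.toReal_nonneg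
  refine ⟨3 * C * (Φ ^ (1/2:ℝ)).toReal + 1, by nlinarith, ?_⟩
  intro σ hσ a u _ha _hu
  -- weights
  set W : ℝ → (Fin d → ℤ) → ℝ≥0∞ :=
    fun s ξ => ENNReal.ofReal (Real.exp (σ * latNorm ξ) * latJap ξ ^ s) with hWdef
  set φf : (Fin d → ℤ) → ℝ≥0∞ := fun ξ => ENNReal.ofReal (latJap ξ ^ (-s₀)) with hφdef
  set A : (Fin d → ℤ) → ℝ≥0∞ := fun ξ => W (s₀+1) ξ * (‖a ξ‖₊ : ℝ≥0∞) with hAdef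
  set G : (Fin d → ℤ) → ℝ≥0∞ := fun ζ => W (m-1) ζ * (‖u ζ‖₊ : ℝ≥0∞) with hGdef
  have hW2 : ∀ (s : ℝ) (ξ : Fin d → ℤ), hWeight σ s ξ = (W s ξ)^2 := by
    intro s ξ
    have hJ := latJap_pos ξ
    rw [hWdef]
    simp only
    rw [← ENNReal.ofReal_pow (by positivity)]
    unfold hWeight
    congr 1
    have e1 : σ * latNorm ξ + σ * latNorm ξ = 2 * σ * latNorm ξ := by ring
    have e2 : s + s = 2 * s := by ring
    rw [mul_pow, pow_two, ← Real.exp_add, e1, pow_two, ← Real.rpow_add hJ, e2]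
  have hNS : ∀ (s : ℝ) (c : (Fin d → ℤ) → ℂ),
      hNormSq σ s c = ∑' ξ, (W s ξ * (‖c ξ‖₊:ℝ≥0∞))^2 := by
    intro s c
    unfold hNormSq
    apply tsum_congr
    intro ξ
    rw [hW2, mul_pow]
  -- pointwise weighted symbol bound
  have hptw : ∀ ξ ζ : Fin d → ℤ,
      W 0 ξ * (‖p (toEuc ξ) - p (toEuc ζ)‖₊ : ℝ≥0∞)
        ≤ ENNReal.ofReal C *
          (φf (ξ-ζ) * W (s₀+1) (ξ-ζ) * W (m-1) ζ
            + W (s₀+1) (ξ-ζ) * (φf ζ * W (m-1) ζ)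
            + φf ξ * (W (s₀+1) (ξ-ζ) * W (m-1) ζ)) := by
    intro ξ ζ
    have hJξ := latJap_pos ξ
    have hJζ := latJap_pos ζ
    have hJd := latJap_pos (ξ - ζ)
    have hp1 : (0:ℝ) < latJap (ξ-ζ) ^ (-s₀) := Real.rpow_pos_of_pos hJd _
    have hp2 : (0:ℝ) < latJap (ξ-ζ) ^ (s₀+1) := Real.rpow_pos_of_pos hJd _
    have hp3 : (0:ℝ) < latJap ζ ^ (m-1) := Real.rpow_pos_of_pos hJζ _
    have hp4 : (0:ℝ) < latJap ζ ^ (-s₀) := Real.rpow_pos_of_pos hJζ _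
    have hp5 : (0:ℝ) < latJap ξ ^ (-s₀) := Real.rpow_pos_of_pos hJξ _
    have hTkey := hkey (toEuc ξ) (toEuc ζ)
    rw [← toEuc_sub] at hTkey
    simp only [← latJap_eq_jr] at hTkey
    have hexp : Real.exp (σ * latNorm ξ)
        ≤ Real.exp (σ * latNorm (ξ-ζ)) * Real.exp (σ * latNorm ζ) := by
      rw [← Real.exp_add]
      apply Real.exp_le_exp.mpr
      have ht := latNorm_triangle ξ ζ
      nlinarith [hσ.le]
    have hnn : (0:ℝ) ≤ ‖p (toEuc ξ) - p (toEuc ζ)‖ := norm_nonneg _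
    have hexp1 : (0:ℝ) < Real.exp (σ * latNorm (ξ-ζ)) := Real.exp_pos _
    have hexp2 : (0:ℝ) < Real.exp (σ * latNorm ζ) := Real.exp_pos _
    have hexp0 : (0:ℝ) < Real.exp (σ * latNorm ξ) := Real.exp_pos _
    have hreal : Real.exp (σ * latNorm ξ) * ‖p (toEuc ξ) - p (toEuc ζ)‖
        ≤ C * (latJap (ξ-ζ) ^ (-s₀) * (Real.exp (σ * latNorm (ξ-ζ)) * latJap (ξ-ζ) ^ (s₀+1))
                * (Real.exp (σ * latNorm ζ) * latJap ζ ^ (m-1))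
              + (Real.exp (σ * latNorm (ξ-ζ)) * latJap (ξ-ζ) ^ (s₀+1))
                * (latJap ζ ^ (-s₀) * (Real.exp (σ * latNorm ζ) * latJap ζ ^ (m-1)))
              + latJap ξ ^ (-s₀) * ((Real.exp (σ * latNorm (ξ-ζ)) * latJap (ξ-ζ) ^ (s₀+1))
                * (Real.exp (σ * latNorm ζ) * latJap ζ ^ (m-1)))) := by
      have hb : Real.exp (σ * latNorm ξ) * ‖p (toEuc ξ) - p (toEuc ζ)‖
          ≤ (Real.exp (σ * latNorm (ξ-ζ)) * Real.exp (σ * latNorm ζ))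
            * (C * (latJap (ξ-ζ) ^ (-s₀) * latJap (ξ-ζ) ^ (s₀+1) * latJap ζ ^ (m-1)
              + latJap ζ ^ (-s₀) * latJap (ξ-ζ) ^ (s₀+1) * latJap ζ ^ (m-1)
              + latJap ξ ^ (-s₀) * latJap (ξ-ζ) ^ (s₀+1) * latJap ζ ^ (m-1))) := by
        apply mul_le_mul hexp hTkey hnn
        positivity
      calc Real.exp (σ * latNorm ξ) * ‖p (toEuc ξ) - p (toEuc ζ)‖ ≤ _ := hb
        _ = _ := by ring
    -- pass to ℝ≥0∞
    have hW0 : W 0 ξ = ENNReal.ofReal (Real.exp (σ * latNorm ξ)) := by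
      rw [hWdef]; simp only; rw [Real.rpow_zero, mul_one]
    rw [hW0, ← enorm_eq_nnnorm, ← ofReal_norm, ← ENNReal.ofReal_mul hexp0.le]
    calc ENNReal.ofReal (Real.exp (σ * latNorm ξ) * ‖p (toEuc ξ) - p (toEuc ζ)‖)
        ≤ ENNReal.ofReal (C * (latJap (ξ-ζ) ^ (-s₀)
              * (Real.exp (σ * latNorm (ξ-ζ)) * latJap (ξ-ζ) ^ (s₀+1))
              * (Real.exp (σ * latNorm ζ) * latJap ζ ^ (m-1))
            + (Real.exp (σ * latNorm (ξ-ζ)) * latJap (ξ-ζ) ^ (s₀+1))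
              * (latJap ζ ^ (-s₀) * (Real.exp (σ * latNorm ζ) * latJap ζ ^ (m-1)))
            + latJap ξ ^ (-s₀) * ((Real.exp (σ * latNorm (ξ-ζ)) * latJap (ξ-ζ) ^ (s₀+1))
              * (Real.exp (σ * latNorm ζ) * latJap ζ ^ (m-1))))) :=
          ENNReal.ofReal_le_ofReal hreal
      _ = ENNReal.ofReal C *
          (φf (ξ-ζ) * W (s₀+1) (ξ-ζ) * W (m-1) ζ
            + W (s₀+1) (ξ-ζ) * (φf ζ * W (m-1) ζ)
            + φf ξ * (W (s₀+1) (ξ-ζ) * W (m-1) ζ)) := by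
          have hP1 : φf (ξ-ζ) * W (s₀+1) (ξ-ζ) * W (m-1) ζ
              = ENNReal.ofReal (latJap (ξ-ζ) ^ (-s₀)
                  * (Real.exp (σ * latNorm (ξ-ζ)) * latJap (ξ-ζ) ^ (s₀+1))
                  * (Real.exp (σ * latNorm ζ) * latJap ζ ^ (m-1))) := by
            rw [hWdef, hφdef]
            simp only
            rw [← ENNReal.ofReal_mul (by positivity), ← ENNReal.ofReal_mul (by positivity)]
          have hP2 : W (s₀+1) (ξ-ζ) * (φf ζ * W (m-1) ζ)
              = ENNReal.ofReal ((Real.exp (σ * latNorm (ξ-ζ)) * latJap (ξ-ζ) ^ (s₀+1))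
                  * (latJap ζ ^ (-s₀) * (Real.exp (σ * latNorm ζ) * latJap ζ ^ (m-1)))) := by
            rw [hWdef, hφdef]
            simp only
            rw [← ENNReal.ofReal_mul (by positivity), ← ENNReal.ofReal_mul (by positivity)]
          have hP3 : φf ξ * (W (s₀+1) (ξ-ζ) * W (m-1) ζ)
              = ENNReal.ofReal (latJap ξ ^ (-s₀)
                  * ((Real.exp (σ * latNorm (ξ-ζ)) * latJap (ξ-ζ) ^ (s₀+1))
                  * (Real.exp (σ * latNorm ζ) * latJap ζ ^ (m-1)))) := by
            rw [hWdef, hφdef]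
            simp only
            rw [← ENNReal.ofReal_mul (by positivity), ← ENNReal.ofReal_mul (by positivity)]
          rw [hP1, hP2, hP3, ← ENNReal.ofReal_add (by positivity) (by positivity),
            ← ENNReal.ofReal_add (by positivity) (by positivity),
            ← ENNReal.ofReal_mul hCpos.le]
  -- pointwise commutator bound
  have hXYZ : ∀ ξ : Fin d → ℤ,
      W 0 ξ * (‖commCoef p a u ξ‖₊ : ℝ≥0∞)
        ≤ ENNReal.ofReal C *
          ((∑' ζ, (φf (ξ-ζ) * A (ξ-ζ)) * G ζ)
            + (∑' ζ, A (ξ-ζ) * (φf ζ * G ζ))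
            + φf ξ * ∑' ζ, A (ξ-ζ) * G ζ) := by
    intro ξ
    have h1 : (‖commCoef p a u ξ‖₊ : ℝ≥0∞)
        ≤ ∑' ζ, (‖a (ξ-ζ) * (p (toEuc ξ) - p (toEuc ζ)) * u ζ‖₊ : ℝ≥0∞) := by
      unfold commCoef
      exact nnnorm_tsum_le_enn _
    have h3 : ∀ ζ : Fin d → ℤ,
        W 0 ξ * (‖a (ξ-ζ) * (p (toEuc ξ) - p (toEuc ζ)) * u ζ‖₊ : ℝ≥0∞)
          ≤ ENNReal.ofReal C * ((φf (ξ-ζ) * A (ξ-ζ)) * G ζ + A (ξ-ζ) * (φf ζ * G ζ)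
              + φf ξ * (A (ξ-ζ) * G ζ)) := by
      intro ζ
      have e : (‖a (ξ-ζ) * (p (toEuc ξ) - p (toEuc ζ)) * u ζ‖₊ : ℝ≥0∞)
          = (‖a (ξ-ζ)‖₊ : ℝ≥0∞) * (‖p (toEuc ξ) - p (toEuc ζ)‖₊ : ℝ≥0∞) * (‖u ζ‖₊ : ℝ≥0∞) := by
        rw [nnnorm_mul, nnnorm_mul, ENNReal.coe_mul, ENNReal.coe_mul]
      rw [e]
      calc W 0 ξ * ((‖a (ξ-ζ)‖₊ : ℝ≥0∞) * (‖p (toEuc ξ) - p (toEuc ζ)‖₊ : ℝ≥0∞) * (‖u ζ‖₊ : ℝ≥0∞))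
          = (‖a (ξ-ζ)‖₊ : ℝ≥0∞) * (W 0 ξ * (‖p (toEuc ξ) - p (toEuc ζ)‖₊ : ℝ≥0∞))
              * (‖u ζ‖₊ : ℝ≥0∞) := by ring
        _ ≤ (‖a (ξ-ζ)‖₊ : ℝ≥0∞) * (ENNReal.ofReal C *
              (φf (ξ-ζ) * W (s₀+1) (ξ-ζ) * W (m-1) ζ
                + W (s₀+1) (ξ-ζ) * (φf ζ * W (m-1) ζ)
                + φf ξ * (W (s₀+1) (ξ-ζ) * W (m-1) ζ)))
              * (‖u ζ‖₊ : ℝ≥0∞) := by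
            exact mul_le_mul' (mul_le_mul' le_rfl (hptw ξ ζ)) le_rfl
        _ = ENNReal.ofReal C * ((φf (ξ-ζ) * A (ξ-ζ)) * G ζ + A (ξ-ζ) * (φf ζ * G ζ)
              + φf ξ * (A (ξ-ζ) * G ζ)) := by
            rw [hAdef, hGdef]
            simp only
            ring
    calc W 0 ξ * (‖commCoef p a u ξ‖₊ : ℝ≥0∞)
        ≤ W 0 ξ * ∑' ζ, (‖a (ξ-ζ) * (p (toEuc ξ) - p (toEuc ζ)) * u ζ‖₊ : ℝ≥0∞) :=
          mul_le_mul' le_rfl h1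
      _ = ∑' ζ, W 0 ξ * (‖a (ξ-ζ) * (p (toEuc ξ) - p (toEuc ζ)) * u ζ‖₊ : ℝ≥0∞) :=
          ENNReal.tsum_mul_left.symm
      _ ≤ ∑' ζ, ENNReal.ofReal C * ((φf (ξ-ζ) * A (ξ-ζ)) * G ζ + A (ξ-ζ) * (φf ζ * G ζ)
              + φf ξ * (A (ξ-ζ) * G ζ)) := ENNReal.tsum_le_tsum h3
      _ = ENNReal.ofReal C * ∑' ζ, ((φf (ξ-ζ) * A (ξ-ζ)) * G ζ + A (ξ-ζ) * (φf ζ * G ζ)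
              + φf ξ * (A (ξ-ζ) * G ζ)) := ENNReal.tsum_mul_left
      _ = ENNReal.ofReal C *
          ((∑' ζ, (φf (ξ-ζ) * A (ξ-ζ)) * G ζ)
            + (∑' ζ, A (ξ-ζ) * (φf ζ * G ζ))
            + φf ξ * ∑' ζ, A (ξ-ζ) * G ζ) := by
          congr 1
          rw [ENNReal.tsum_add, ENNReal.tsum_add, ENNReal.tsum_mul_left]
  -- summed bounds
  set SA : ℝ≥0∞ := ∑' ξ, (A ξ)^2 with hSAdef
  set SG : ℝ≥0∞ := ∑' ζ, (G ζ)^2 with hSGdef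
  have hsum1 : (∑' ξ, ((∑' ζ, (φf (ξ-ζ) * A (ξ-ζ)) * G ζ))^2) ≤ Φ * (SA * SG) := by
    have hy := young1 (fun η => φf η * A η) G
    have hcs := enn_cs φf A
    have h2 : (∑' η, φf η * A η)^2 ≤ Φ * SA := by
      calc (∑' η, φf η * A η)^2
          ≤ ((∑' η, (φf η)^2) ^ (1/2:ℝ) * (∑' η, (A η)^2) ^ (1/2:ℝ))^2 :=
            pow_le_pow_left' hcs 2
        _ = Φ * SA := by rw [mul_pow, ereal_sqh, ereal_sqh]
    calc (∑' ξ, ((∑' ζ, (φf (ξ-ζ) * A (ξ-ζ)) * G ζ))^2)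
        ≤ (∑' η, φf η * A η)^2 * ∑' ζ, (G ζ)^2 := hy
      _ ≤ (Φ * SA) * SG := mul_le_mul' h2 le_rfl
      _ = Φ * (SA * SG) := by ring
  have hsum2 : (∑' ξ, ((∑' ζ, A (ξ-ζ) * (φf ζ * G ζ)))^2) ≤ Φ * (SA * SG) := by
    have hy := young2 A (fun ζ => φf ζ * G ζ)
    have hcs := enn_cs φf G
    have h2 : (∑' ζ, φf ζ * G ζ)^2 ≤ Φ * SG := by
      calc (∑' ζ, φf ζ * G ζ)^2
          ≤ ((∑' ζ, (φf ζ)^2) ^ (1/2:ℝ) * (∑' ζ, (G ζ)^2) ^ (1/2:ℝ))^2 :=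
            pow_le_pow_left' hcs 2
        _ = Φ * SG := by rw [mul_pow, ereal_sqh, ereal_sqh]
    calc (∑' ξ, ((∑' ζ, A (ξ-ζ) * (φf ζ * G ζ)))^2)
        ≤ (∑' η, (A η)^2) * (∑' ζ, φf ζ * G ζ)^2 := hy
      _ ≤ SA * (Φ * SG) := mul_le_mul' le_rfl h2
      _ = Φ * (SA * SG) := by ring
  have hsum3 : (∑' ξ, (φf ξ * ∑' ζ, A (ξ-ζ) * G ζ)^2) ≤ Φ * (SA * SG) :=
    young3 φf A G
  -- total
  have htotal : hNormSq σ 0 (commCoef p a u)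
      ≤ (9:ℝ≥0∞) * ((ENNReal.ofReal C)^2 * (Φ * (SA * SG))) := by
    rw [hNS 0 (commCoef p a u)]
    have hpt : ∀ ξ : Fin d → ℤ, (W 0 ξ * (‖commCoef p a u ξ‖₊:ℝ≥0∞))^2
        ≤ (ENNReal.ofReal C)^2 *
          (3 * (((∑' ζ, (φf (ξ-ζ) * A (ξ-ζ)) * G ζ))^2
            + ((∑' ζ, A (ξ-ζ) * (φf ζ * G ζ)))^2
            + (φf ξ * ∑' ζ, A (ξ-ζ) * G ζ)^2)) := by
      intro ξ
      calc (W 0 ξ * (‖commCoef p a u ξ‖₊:ℝ≥0∞))^2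
          ≤ (ENNReal.ofReal C *
              ((∑' ζ, (φf (ξ-ζ) * A (ξ-ζ)) * G ζ)
                + (∑' ζ, A (ξ-ζ) * (φf ζ * G ζ))
                + φf ξ * ∑' ζ, A (ξ-ζ) * G ζ))^2 := pow_le_pow_left' (hXYZ ξ) 2
        _ = (ENNReal.ofReal C)^2 *
              ((∑' ζ, (φf (ξ-ζ) * A (ξ-ζ)) * G ζ)
                + (∑' ζ, A (ξ-ζ) * (φf ζ * G ζ))
                + φf ξ * ∑' ζ, A (ξ-ζ) * G ζ)^2 := by rw [mul_pow]
        _ ≤ (ENNReal.ofReal C)^2 *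
            (3 * (((∑' ζ, (φf (ξ-ζ) * A (ξ-ζ)) * G ζ))^2
              + ((∑' ζ, A (ξ-ζ) * (φf ζ * G ζ)))^2
              + (φf ξ * ∑' ζ, A (ξ-ζ) * G ζ)^2)) :=
            mul_le_mul' le_rfl (enn_add3_sq _ _ _)
    calc ∑' ξ, (W 0 ξ * (‖commCoef p a u ξ‖₊:ℝ≥0∞))^2
        ≤ ∑' ξ, (ENNReal.ofReal C)^2 *
          (3 * (((∑' ζ, (φf (ξ-ζ) * A (ξ-ζ)) * G ζ))^2
            + ((∑' ζ, A (ξ-ζ) * (φf ζ * G ζ)))^2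
            + (φf ξ * ∑' ζ, A (ξ-ζ) * G ζ)^2)) := ENNReal.tsum_le_tsum hpt
      _ = (ENNReal.ofReal C)^2 * (3 *
          ((∑' ξ, ((∑' ζ, (φf (ξ-ζ) * A (ξ-ζ)) * G ζ))^2)
            + (∑' ξ, ((∑' ζ, A (ξ-ζ) * (φf ζ * G ζ)))^2)
            + (∑' ξ, (φf ξ * ∑' ζ, A (ξ-ζ) * G ζ)^2))) := by
          rw [ENNReal.tsum_mul_left]
          congr 1
          rw [ENNReal.tsum_mul_left]
          congr 1
          rw [ENNReal.tsum_add, ENNReal.tsum_add]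
      _ ≤ (ENNReal.ofReal C)^2 * (3 * ((Φ * (SA * SG)) + (Φ * (SA * SG)) + (Φ * (SA * SG)))) := by
          apply mul_le_mul' le_rfl
          apply mul_le_mul' le_rfl
          exact add_le_add (add_le_add hsum1 hsum2) hsum3
      _ = (9:ℝ≥0∞) * ((ENNReal.ofReal C)^2 * (Φ * (SA * SG))) := by ring
  -- take square roots
  have hnorm : hNorm σ 0 (commCoef p a u)
      ≤ 3 * (ENNReal.ofReal C * (Φ ^ (1/2:ℝ) * (SA ^ (1/2:ℝ) * SG ^ (1/2:ℝ)))) := by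
    unfold hNorm
    calc (hNormSq σ 0 (commCoef p a u)) ^ (1/2:ℝ)
        ≤ ((9:ℝ≥0∞) * ((ENNReal.ofReal C)^2 * (Φ * (SA * SG)))) ^ (1/2:ℝ) :=
          ENNReal.rpow_le_rpow htotal (by norm_num)
      _ = 3 * (ENNReal.ofReal C * (Φ ^ (1/2:ℝ) * (SA ^ (1/2:ℝ) * SG ^ (1/2:ℝ)))) := by
          rw [ENNReal.mul_rpow_of_nonneg _ _ (by norm_num : (0:ℝ) ≤ 1/2),
            ENNReal.mul_rpow_of_nonneg _ _ (by norm_num : (0:ℝ) ≤ 1/2),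
            ENNReal.mul_rpow_of_nonneg _ _ (by norm_num : (0:ℝ) ≤ 1/2),
            ENNReal.mul_rpow_of_nonneg _ _ (by norm_num : (0:ℝ) ≤ 1/2)]
          rw [show (9:ℝ≥0∞) = 3^2 by norm_num, enn_hsq, enn_hsq]
  -- identify the norms
  have hSAnorm : hNorm σ (s₀+1) a = SA ^ (1/2:ℝ) := by
    unfold hNorm
    congr 1
    rw [hNS (s₀+1) a, hSAdef]
  have hSGnorm : hNorm σ (m-1) u = SG ^ (1/2:ℝ) := by
    unfold hNorm
    congr 1
    rw [hNS (m-1) u, hSGdef]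
  -- conclude
  have hCbound : (3:ℝ≥0∞) * (ENNReal.ofReal C * Φ ^ (1/2:ℝ))
      ≤ ENNReal.ofReal (3 * C * (Φ ^ (1/2:ℝ)).toReal + 1) := by
    have e1 : Φ ^ (1/2:ℝ) = ENNReal.ofReal ((Φ ^ (1/2:ℝ)).toReal) :=
      (ENNReal.ofReal_toReal hΦh).symm
    calc (3:ℝ≥0∞) * (ENNReal.ofReal C * Φ ^ (1/2:ℝ))
        = ENNReal.ofReal 3 * (ENNReal.ofReal C * ENNReal.ofReal ((Φ ^ (1/2:ℝ)).toReal)) := by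
          rw [← e1]
          norm_num
      _ = ENNReal.ofReal (3 * C * (Φ ^ (1/2:ℝ)).toReal) := by
          rw [← ENNReal.ofReal_mul hCpos.le, ← ENNReal.ofReal_mul (by norm_num : (0:ℝ) ≤ 3)]
          ring_nf
      _ ≤ ENNReal.ofReal (3 * C * (Φ ^ (1/2:ℝ)).toReal + 1) :=
          ENNReal.ofReal_le_ofReal (le_add_of_nonneg_right zero_le_one)
  calc hNorm σ 0 (commCoef p a u)
      ≤ 3 * (ENNReal.ofReal C * (Φ ^ (1/2:ℝ) * (SA ^ (1/2:ℝ) * SG ^ (1/2:ℝ)))) := hnorm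
    _ = (3 * (ENNReal.ofReal C * Φ ^ (1/2:ℝ))) * SA ^ (1/2:ℝ) * SG ^ (1/2:ℝ) := by ring
    _ ≤ ENNReal.ofReal (3 * C * (Φ ^ (1/2:ℝ)).toReal + 1) * SA ^ (1/2:ℝ) * SG ^ (1/2:ℝ) := by
        exact mul_le_mul' (mul_le_mul' hCbound le_rfl) le_rfl
    _ = ENNReal.ofReal (3 * C * (Φ ^ (1/2:ℝ)).toReal + 1) * hNorm σ (s₀+1) a * hNorm σ (m-1) u := by
        rw [hSAnorm, hSGnorm]
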